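/- arXiv:1411.1819 — 7 statements merged into one kernel-verified Lean document; each statement's English description precedes it below -/
import Mathlib

section
/- Let I : ℝ^d → ℝ be continuously differentiable, let S, T_1, …, T_m : ℝ^d → ℝ^{d×d} be functions taking values in skew-symmetric matrices, let h, w_1, …, w_m ∈ ℝ, and suppose x, y ∈ ℝ^d satisfy the implicit one-step relation y = x + (h S((x+y)/2) + Σ_{r=1}^m w_r T_r((x+y)/2)) · ∫₀¹ ∇I(x + τ(y − x)) dτ. Then I(y) = I(x). (Hence the conservative numerical method exactly preserves the invariant I along every realization of the increments.) -/
/-! The averaged gradient `g = ∫₀¹ ∇I(x + τ(y - x)) dτ` is a discrete gradient: the fundamental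
theorem of calculus along the segment gives `I y - I x = ⟪g, y - x⟫`. The step makes `y - x` the
image of `g` under a skew-symmetric matrix, and the quadratic form of a skew-symmetric matrix
vanishes. -/

open Matrix
open scoped RealInnerProductSpace

theorem Matrix.dotProduct_mulVec_self_eq_zero_of_transpose_eq_neg {n R : Type*} [Fintype n]
    [CommRing R] [IsAddTorsionFree R] {A : Matrix n n R} (hA : Aᵀ = -A) (v : n → R) :
    v ⬝ᵥ A *ᵥ v = 0 :=
  self_eq_neg.mp <| calc
    v ⬝ᵥ A *ᵥ v = Aᵀ *ᵥ v ⬝ᵥ v := by rw [dotProduct_mulVec, mulVec_transpose]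
    _ = -(v ⬝ᵥ A *ᵥ v) := by rw [hA, neg_mulVec, neg_dotProduct, dotProduct_comm]

theorem Matrix.inner_toEuclideanLin_self_eq_zero_of_transpose_eq_neg {n : Type*} [Fintype n]
    [DecidableEq n] {A : Matrix n n ℝ} (hA : Aᵀ = -A) (v : EuclideanSpace ℝ n) :
    ⟪v, toEuclideanLin A v⟫ = 0 := by
  rw [EuclideanSpace.inner_eq_star_dotProduct, star_trivial, dotProduct_comm]
  exact dotProduct_mulVec_self_eq_zero_of_transpose_eq_neg hA v.ofLp

section

variable {E : Type*} [NormedAddCommGroup E] [InnerProductSpace ℝ E] [CompleteSpace E]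

theorem ContDiff.continuous_gradient {f : E → ℝ} (hf : ContDiff ℝ 1 f) : Continuous (gradient f) :=
  (InnerProductSpace.toDual ℝ E).symm.continuous.comp (hf.continuous_fderiv one_ne_zero)

theorem ContDiff.sub_eq_inner_integral_gradient {f : E → ℝ} (hf : ContDiff ℝ 1 f) (x y : E) :
    f y - f x = ⟪(∫ τ in (0:ℝ)..1, gradient f (x + τ • (y - x))), y - x⟫ := by
  have hgrad_cont : Continuous fun τ : ℝ => gradient f (x + τ • (y - x)) :=
    hf.continuous_gradient.comp (by fun_prop)
  have hderiv (τ : ℝ) : HasDerivAt (fun t : ℝ => f (x + t • (y - x)))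
      ⟪gradient f (x + τ • (y - x)), y - x⟫ τ := by
    rw [inner_gradient_left]
    exact (hf.differentiable one_ne_zero _).hasFDerivAt.comp_hasDerivAt τ
      (((hasDerivAt_id τ).smul_const (y - x)).const_add x |>.congr_deriv (one_smul ℝ _))
  calc f y - f x = ∫ τ in (0:ℝ)..1, ⟪gradient f (x + τ • (y - x)), y - x⟫ := by
        rw [intervalIntegral.integral_eq_sub_of_hasDerivAt (fun τ _ => hderiv τ)
          ((hgrad_cont.inner continuous_const).intervalIntegrable 0 1)]
        simp
    _ = _ :=
      ((innerSL ℝ).flip (y - x)).intervalIntegral_comp_comm (hgrad_cont.intervalIntegrable 0 1)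

end

/-- One step of the conservative method
`y = x + (h S((x+y)/2) + Σ_r w_r T_r((x+y)/2)) ∫₀¹ ∇I(x + τ(y−x)) dτ`
with skew-symmetric matrices `S(z)`, `T_r(z)` exactly preserves the invariant:
`I(y) = I(x)`. -/
theorem conservative_method_preserves_invariant
    (d m : ℕ) (I : EuclideanSpace ℝ (Fin d) → ℝ) (hI : ContDiff ℝ 1 I)
    (S : EuclideanSpace ℝ (Fin d) → Matrix (Fin d) (Fin d) ℝ)
    (T : Fin m → EuclideanSpace ℝ (Fin d) → Matrix (Fin d) (Fin d) ℝ)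
    (hS : ∀ z, (S z)ᵀ = -(S z)) (hT : ∀ r z, (T r z)ᵀ = -(T r z))
    (h : ℝ) (w : Fin m → ℝ) (x y : EuclideanSpace ℝ (Fin d))
    (hstep : y = x + Matrix.toEuclideanLin
        (h • S ((2:ℝ)⁻¹ • (x + y)) + ∑ r, w r • T r ((2:ℝ)⁻¹ • (x + y)))
        (∫ τ in (0:ℝ)..1, gradient I (x + τ • (y - x)))) :
    I y = I x := by
  set M := h • S ((2:ℝ)⁻¹ • (x + y)) + ∑ r, w r • T r ((2:ℝ)⁻¹ • (x + y))
  have hM_skew : Mᵀ = -M := by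
    simp only [M, transpose_add, transpose_smul, transpose_sum, hS, hT, smul_neg, neg_add,
      Finset.sum_neg_distrib]
  rw [← sub_eq_zero, hI.sub_eq_inner_integral_gradient]
  set g := ∫ τ in (0:ℝ)..1, gradient I (x + τ • (y - x))
  rw [sub_eq_of_eq_add' hstep]
  exact inner_toEuclideanLin_self_eq_zero_of_transpose_eq_neg hM_skew _
end

section
/- Let C ∈ ℝ^{d×d} be symmetric, d₀ ∈ ℝ^d, I(x) = ½ xᵀC x + d₀ᵀ x, and let M ∈ ℝ^{d×d} be skew-symmetric. If x, y ∈ ℝ^d satisfy the midpoint relation y = x + M·(C·((x+y)/2) + d₀) = x + M·∇I((x+y)/2), then I(y) = I(x). (The stochastic midpoint scheme, whose one-step map has this form with M = hS((x+y)/2) + Σ_r w_r T_r((x+y)/2), preserves all quadratic invariants.) -/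
open Matrix
open scoped RealInnerProductSpace

/-- The midpoint scheme `y = x + M·∇I((x+y)/2)` with `M` skew-symmetric
preserves the quadratic invariant `I(x) = ½ xᵀC x + d₀ᵀ x` (`C` symmetric):
`I(y) = I(x)`. -/
theorem midpoint_scheme_preserves_quadratic_invariant
    (d : ℕ) (C : Matrix (Fin d) (Fin d) ℝ) (hC : Cᵀ = C)
    (d₀ : EuclideanSpace ℝ (Fin d))
    (I : EuclideanSpace ℝ (Fin d) → ℝ)
    (hI : ∀ z, I z = (2:ℝ)⁻¹ * ⟪z, Matrix.toEuclideanLin C z⟫ + ⟪d₀, z⟫)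
    (M : Matrix (Fin d) (Fin d) ℝ) (hM : Mᵀ = -M)
    (x y : EuclideanSpace ℝ (Fin d))
    (hstep : y = x + Matrix.toEuclideanLin M
        (Matrix.toEuclideanLin C ((2:ℝ)⁻¹ • (x + y)) + d₀)) :
    I y = I x := by
  -- inner = dotProduct
  have hip : ∀ u v : EuclideanSpace ℝ (Fin d),
      ⟪u, v⟫ = (fun i => u i) ⬝ᵥ (fun i => v i) := by
    intro u v
    simp [PiLp.inner_apply, RCLike.inner_apply, dotProduct, mul_comm]
  -- symmetry of C in dotProduct
  have hsym : ∀ u v : Fin d → ℝ, u ⬝ᵥ C *ᵥ v = v ⬝ᵥ C *ᵥ u := by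
    intro u v
    rw [dotProduct_mulVec, ← mulVec_transpose, hC, dotProduct_comm]
  -- skew-symmetry
  have hskew : ∀ v : Fin d → ℝ, (M *ᵥ v) ⬝ᵥ v = 0 := by
    intro v
    have h1 : (M *ᵥ v) ⬝ᵥ v = v ⬝ᵥ (M *ᵥ v) := dotProduct_comm _ _
    have h2 : v ⬝ᵥ (M *ᵥ v) = (Mᵀ *ᵥ v) ⬝ᵥ v := by
      rw [dotProduct_mulVec, ← mulVec_transpose, dotProduct_comm]
    rw [hM, neg_mulVec, neg_dotProduct] at h2
    linarith [h1, h2]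
  -- vectors as plain functions
  set xf : Fin d → ℝ := fun i => x i with hxf
  set yf : Fin d → ℝ := fun i => y i with hyf
  set df : Fin d → ℝ := fun i => d₀ i with hdf
  set v : Fin d → ℝ := C *ᵥ ((2:ℝ)⁻¹ • (xf + yf)) + df with hv
  have hstep' : yf = xf + M *ᵥ v := by
    funext i
    have := congrFun (congrArg (fun z : EuclideanSpace ℝ (Fin d) => (fun j => z j)) hstep) i
    simpa [toEuclideanLin_apply, hv, mulVec_add] using this
  have hy : I y = (2:ℝ)⁻¹ * (yf ⬝ᵥ C *ᵥ yf) + df ⬝ᵥ yf := by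
    rw [hI, hip, hip]; rfl
  have hx : I x = (2:ℝ)⁻¹ * (xf ⬝ᵥ C *ᵥ xf) + df ⬝ᵥ xf := by
    rw [hI, hip, hip]; rfl
  rw [hx, hy]
  -- key computation
  have key : (M *ᵥ v) ⬝ᵥ v = 0 := hskew v
  have hvexp : v = (2:ℝ)⁻¹ • (C *ᵥ xf) + (2:ℝ)⁻¹ • (C *ᵥ yf) + df := by
    rw [hv, smul_add, mulVec_add, mulVec_smul, mulVec_smul]
  have hd : yf - xf = M *ᵥ v := by rw [hstep']; abel
  have expand : (M *ᵥ v) ⬝ᵥ v = (yf - xf) ⬝ᵥ ((2:ℝ)⁻¹ • (C *ᵥ xf) + (2:ℝ)⁻¹ • (C *ᵥ yf) + df) := by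
    rw [← hd, ← hvexp]
  rw [expand] at key
  have hsymxy := hsym xf yf
  simp only [sub_dotProduct, dotProduct_add, dotProduct_smul, smul_eq_mul] at key
  linarith [key, hsymxy, dotProduct_comm df yf, dotProduct_comm df xf]
end

section
/- Let (b_i, c_i)_{i=1}^D be a quadrature formula on [0,1] of order q, let P be a real polynomial in d variables of total degree at most q, and set I(x) = P(x). Let S, T_1, …, T_m : ℝ^d → ℝ^{d×d} take values in skew-symmetric matrices, let h, w_1, …, w_m ∈ ℝ, and suppose x, y ∈ ℝ^d satisfy y = x + (h S((x+y)/2) + Σ_{r=1}^m w_r T_r((x+y)/2)) · Σ_{i=1}^D b_i ∇I(x + c_i(y − x)). Then I(y) = I(x). That is, the conservative scheme implemented with a quadrature formula of order q exactly preserves every polynomial conserved quantity of degree ν ≤ q. -/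
/-!
Restricted to the segment from `x` to `y`, the invariant `I` is a univariate polynomial `p` of
degree at most `q`, so its derivative `p'(τ) = ⟪∇I(x + τ(y - x)), y - x⟫` has degree below `q` and
is integrated exactly by the quadrature formula. Hence `⟪v, y - x⟫ = I y - I x` for the averaged
gradient `v = Σ bᵢ ∇I(x + cᵢ(y - x))`, while `y - x = A v` with `A` skew-symmetric gives
`⟪v, A v⟫ = 0`.
-/

open Matrix RealInnerProductSpace Polynomial

namespace Matrix

theorem dotProduct_mulVec_self_eq_zero_of_transpose_eq_neg_s6 {n R : Type*} [Fintype n] [CommRing R]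
    [IsAddTorsionFree R] {A : Matrix n n R} (hA : Aᵀ = -A) (v : n → R) :
    v ⬝ᵥ A *ᵥ v = 0 := by
  refine self_eq_neg.mp ?_
  calc v ⬝ᵥ A *ᵥ v = (A *ᵥ v) ⬝ᵥ v := dotProduct_comm _ _
    _ = v ⬝ᵥ Aᵀ *ᵥ v := by rw [dotProduct_mulVec, vecMul_transpose]
    _ = -(v ⬝ᵥ A *ᵥ v) := by rw [hA, neg_mulVec, dotProduct_neg]

theorem inner_toEuclideanLin_self_eq_zero_of_transpose_eq_neg_s6 {n : Type*} [Fintype n]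
    [DecidableEq n] {A : Matrix n n ℝ} (hA : Aᵀ = -A) (v : EuclideanSpace ℝ n) :
    ⟪v, toEuclideanLin A v⟫ = 0 := by
  rw [EuclideanSpace.inner_eq_star_dotProduct, toLpLin_apply, star_trivial, dotProduct_comm]
  exact dotProduct_mulVec_self_eq_zero_of_transpose_eq_neg_s6 hA _

end Matrix

namespace MvPolynomial

theorem differentiable_eval {ι 𝕜 : Type*} [Fintype ι] [NontriviallyNormedField 𝕜]
    (P : MvPolynomial ι 𝕜) : Differentiable 𝕜 fun v : ι → 𝕜 => eval v P := by
  induction P using MvPolynomial.induction_on with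
  | C a => simp
  | add p q hp hq => simp only [map_add]; exact hp.add hq
  | mul_X p i hp => simp only [map_mul, eval_X]; exact hp.mul (differentiable_apply i)

variable {ι R : Type*} [CommSemiring R]

noncomputable def restrictToLine (P : MvPolynomial ι R) (x v : ι → R) : R[X] :=
  aeval (fun i => Polynomial.C (v i) * Polynomial.X + Polynomial.C (x i)) P

theorem eval_restrictToLine (P : MvPolynomial ι R) (x v : ι → R) (t : R) :
    (P.restrictToLine x v).eval t = eval (x + t • v) P := by
  rw [restrictToLine, ← Polynomial.coe_aeval_eq_eval, ← AlgHom.comp_apply, comp_aeval,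
    ← coe_aeval_eq_eval]
  refine congrArg (fun f => aeval f P) ?_
  ext i
  simp only [Polynomial.aeval_add, Polynomial.aeval_mul, Polynomial.aeval_C, Polynomial.aeval_X,
    Pi.add_apply, Pi.smul_apply, smul_eq_mul, Algebra.algebraMap_self, RingHom.id_apply]
  ring

theorem natDegree_restrictToLine_le (P : MvPolynomial ι R) (x v : ι → R) :
    (P.restrictToLine x v).natDegree ≤ P.totalDegree := by
  simpa [restrictToLine] using aeval_natDegree_le P le_rfl _ fun _ => natDegree_linear_le

end MvPolynomial

theorem Polynomial.sum_mul_eval_derivative_eq_sub {κ : Type*} [Fintype κ] {q : ℕ} {b c : κ → ℝ}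
    (horder : ∀ p : ℝ[X], p.degree < (q : WithBot ℕ) →
      ∑ i, b i * p.eval (c i) = ∫ τ in (0:ℝ)..1, p.eval τ)
    {p : ℝ[X]} (hp : p.natDegree ≤ q) :
    ∑ i, b i * p.derivative.eval (c i) = p.eval 1 - p.eval 0 := by
  have hdeg : p.derivative.degree < q := by
    rcases eq_or_ne p 0 with rfl | hp0
    · simp
    · exact (degree_derivative_lt hp0).trans_le (degree_le_of_natDegree_le hp)
  rw [horder _ hdeg, intervalIntegral.integral_eq_sub_of_hasDerivAt (fun t _ => p.hasDerivAt t)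
    (p.derivative.continuous.intervalIntegrable _ _)]

section PolynomialOnEuclideanSpace

variable {ι : Type*} {P : MvPolynomial ι ℝ} {I : EuclideanSpace ℝ ι → ℝ}

theorem apply_add_smul_eq_eval_restrictToLine
    (hI : ∀ z, I z = MvPolynomial.eval (fun i => z i) P) (x v : EuclideanSpace ℝ ι) (s : ℝ) :
    I (x + s • v) = (P.restrictToLine x v).eval s := by
  rw [hI, MvPolynomial.eval_restrictToLine]
  rfl

theorem inner_gradient_eq_eval_derivative_restrictToLine [Fintype ι]
    (hI : ∀ z, I z = MvPolynomial.eval (fun i => z i) P) (x v : EuclideanSpace ℝ ι) (t : ℝ) :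
    ⟪gradient I (x + t • v), v⟫ = (P.restrictToLine x v).derivative.eval t := by
  have hdiff : Differentiable ℝ I := by
    have : I = (fun u => MvPolynomial.eval u P) ∘ PiLp.continuousLinearEquiv 2 ℝ (fun _ : ι => ℝ) :=
      funext hI
    rw [this]
    exact (MvPolynomial.differentiable_eval P).comp (ContinuousLinearEquiv.differentiable _)
  have hcurve : HasDerivAt (fun s : ℝ => x + s • v) v t := by
    simpa using ((hasDerivAt_id t).smul_const v).const_add x
  rw [inner_gradient_left]
  refine ((hdiff _).hasFDerivAt.comp_hasDerivAt t hcurve).unique ?_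
  simpa only [Function.comp_def, apply_add_smul_eq_eval_restrictToLine hI] using
    (P.restrictToLine x v).hasDerivAt t

theorem inner_sum_smul_gradient_eq_sub [Fintype ι] {κ : Type*} [Fintype κ] {q : ℕ} {b c : κ → ℝ}
    (horder : ∀ p : ℝ[X], p.degree < (q : WithBot ℕ) →
      ∑ i, b i * p.eval (c i) = ∫ τ in (0:ℝ)..1, p.eval τ)
    (hP : P.totalDegree ≤ q) (hI : ∀ z, I z = MvPolynomial.eval (fun i => z i) P)
    (x y : EuclideanSpace ℝ ι) :
    ⟪∑ i, b i • gradient I (x + c i • (y - x)), y - x⟫ = I y - I x := by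
  set p := P.restrictToLine x.ofLp (y - x).ofLp
  calc ⟪∑ i, b i • gradient I (x + c i • (y - x)), y - x⟫
      = ∑ i, b i * p.derivative.eval (c i) := by
        simp only [sum_inner, real_inner_smul_left,
          inner_gradient_eq_eval_derivative_restrictToLine hI, p]
    _ = p.eval 1 - p.eval 0 :=
        sum_mul_eval_derivative_eq_sub horder ((P.natDegree_restrictToLine_le _ _).trans hP)
    _ = I y - I x := by
        simp only [p, ← apply_add_smul_eq_eval_restrictToLine hI, one_smul, zero_smul,
          add_sub_cancel, add_zero]

end PolynomialOnEuclideanSpace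

theorem quadrature_scheme_preserves_polynomial_invariant_general
    (d m D q : ℕ) (b c : Fin D → ℝ)
    (horder : ∀ p : Polynomial ℝ, p.degree < (q : WithBot ℕ) →
      ∑ i, b i * p.eval (c i) = ∫ τ in (0:ℝ)..1, p.eval τ)
    (P : MvPolynomial (Fin d) ℝ) (hP : P.totalDegree ≤ q)
    (I : EuclideanSpace ℝ (Fin d) → ℝ)
    (hI : ∀ z, I z = MvPolynomial.eval (fun i => z i) P)
    (S : EuclideanSpace ℝ (Fin d) → Matrix (Fin d) (Fin d) ℝ)
    (T : Fin m → EuclideanSpace ℝ (Fin d) → Matrix (Fin d) (Fin d) ℝ)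
    (hS : ∀ z, (S z)ᵀ = -(S z)) (hT : ∀ r z, (T r z)ᵀ = -(T r z))
    (h : ℝ) (w : Fin m → ℝ) (x y : EuclideanSpace ℝ (Fin d))
    (hstep : y = x + Matrix.toEuclideanLin
        (h • S ((2:ℝ)⁻¹ • (x + y)) + ∑ r, w r • T r ((2:ℝ)⁻¹ • (x + y)))
        (∑ i, b i • gradient I (x + c i • (y - x)))) :
    I y = I x := by
  set A := h • S ((2:ℝ)⁻¹ • (x + y)) + ∑ r, w r • T r ((2:ℝ)⁻¹ • (x + y))
  set v := ∑ i, b i • gradient I (x + c i • (y - x))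
  have hA : Aᵀ = -A := by
    simp only [A, transpose_add, transpose_smul, transpose_sum, hS, hT, smul_neg,
      Finset.sum_neg_distrib, neg_add]
  have hyx : y - x = toEuclideanLin A v := by
    rw [hstep, add_sub_cancel_left]
  refine sub_eq_zero.mp ?_
  calc I y - I x = ⟪v, y - x⟫ := (inner_sum_smul_gradient_eq_sub horder hP hI x y).symm
    _ = ⟪v, toEuclideanLin A v⟫ := by rw [hyx]
    _ = 0 := inner_toEuclideanLin_self_eq_zero_of_transpose_eq_neg_s6 hA v

/-- The conservative scheme implemented with a quadrature formula
`(b_i, c_i)_{i=1}^D` of order `q` exactly preserves every polynomial conserved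
quantity `I` of total degree at most `q`: if
`y = x + (h S((x+y)/2) + Σ_r w_r T_r((x+y)/2)) Σ_i b_i ∇I(x + c_i(y − x))`
with skew-symmetric `S(z)`, `T_r(z)`, then `I(y) = I(x)`. -/
theorem quadrature_scheme_preserves_polynomial_invariant
    (d m D q : ℕ) (b c : Fin D → ℝ)
    (hc : ∀ i, c i ∈ Set.Icc (0:ℝ) 1)
    (horder : ∀ p : Polynomial ℝ, p.degree < (q : WithBot ℕ) →
      ∑ i, b i * p.eval (c i) = ∫ τ in (0:ℝ)..1, p.eval τ)
    (P : MvPolynomial (Fin d) ℝ) (hP : P.totalDegree ≤ q)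
    (I : EuclideanSpace ℝ (Fin d) → ℝ)
    (hI : ∀ z, I z = MvPolynomial.eval (fun i => z i) P)
    (S : EuclideanSpace ℝ (Fin d) → Matrix (Fin d) (Fin d) ℝ)
    (T : Fin m → EuclideanSpace ℝ (Fin d) → Matrix (Fin d) (Fin d) ℝ)
    (hS : ∀ z, (S z)ᵀ = -(S z)) (hT : ∀ r z, (T r z)ᵀ = -(T r z))
    (h : ℝ) (w : Fin m → ℝ) (x y : EuclideanSpace ℝ (Fin d))
    (hstep : y = x + Matrix.toEuclideanLin
        (h • S ((2:ℝ)⁻¹ • (x + y)) + ∑ r, w r • T r ((2:ℝ)⁻¹ • (x + y)))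
        (∑ i, b i • gradient I (x + c i • (y - x)))) :
    I y = I x :=
  quadrature_scheme_preserves_polynomial_invariant_general d m D q b c horder P hP I hI S T hS hT h
    w x y hstep
end

section
/- Let (b_i, c_i)_{i=1}^D be a quadrature formula on [0,1] of order q ≥ 1 with nodes c_i ∈ [0,1]. Let I : ℝ^d → ℝ be (q+1)-times continuously differentiable with |∇I(z)| ≤ B for all z and all partial derivatives of I of order q+1 bounded by L. Let S, T_1, …, T_m : ℝ^d → ℝ^{d×d} take values in skew-symmetric matrices with operator norms ‖S(z)‖ ≤ c and ‖T_r(z)‖ ≤ c for all z. Then there exists a constant K, depending only on d, q, c, B, L and the quadrature data, such that whenever h, w_1, …, w_m ∈ ℝ and x, y ∈ ℝ^d satisfy y = x + (h S((x+y)/2) + Σ_{r=1}^m w_r T_r((x+y)/2)) · Σ_{i=1}^D b_i ∇I(x + c_i(y − x)), one has |I(y) − I(x)| ≤ K (|h| + Σ_{r=1}^m |w_r|) · |y − x|^q. -/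
/-! Along the segment `τ ↦ x + τ (y - x)`, `I y - I x = ∫₀¹ ⟪∇I(x + τ(y - x)), y - x⟫ dτ`, and the
quadrature rule applied to this integral gives `⟪v, y - x⟫` with `v = Σᵢ bᵢ ∇I(x + cᵢ(y - x))`.
The scheme says `y - x = M v` with `M` skew-symmetric, so this quadrature value vanishes and
`I y - I x` is a pure quadrature error. Comparing the integrand with its Taylor polynomial of
degree `q - 1` bounds that error by `C ‖y - x‖^(q+1)`, and one factor
`‖y - x‖ = ‖M v‖ ≤ c₀ (|h| + Σ_r |w_r|) Σᵢ |bᵢ| B` gives the claim. -/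

open Matrix Finset Set Polynomial Nat
open scoped RealInnerProductSpace

section Quadrature

variable {κ : Type*} [Fintype κ]

def HasQuadratureOrder (b c : κ → ℝ) (q : ℕ) : Prop :=
  ∀ p : ℝ[X], p.degree < q → ∑ i, b i * p.eval (c i) = ∫ τ in (0 : ℝ)..1, p.eval τ

theorem HasQuadratureOrder.abs_sum_sub_integral_le_of_abs_sub_eval_le {b c : κ → ℝ} {q : ℕ}
    (hbc : HasQuadratureOrder b c q) (hc : ∀ i, c i ∈ Icc (0 : ℝ) 1) {g : ℝ → ℝ}
    (hg : IntervalIntegrable g MeasureTheory.volume 0 1) {p : ℝ[X]} (hp : p.degree < q) {ε : ℝ}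
    (hgp : ∀ τ ∈ Icc (0 : ℝ) 1, |g τ - p.eval τ| ≤ ε) :
    |∑ i, b i * g (c i) - ∫ τ in (0 : ℝ)..1, g τ| ≤ (∑ i, |b i| + 1) * ε := by
  have hsplit : ∑ i, b i * g (c i) - ∫ τ in (0 : ℝ)..1, g τ
      = ∑ i, b i * (g (c i) - p.eval (c i)) - ∫ τ in (0 : ℝ)..1, (g τ - p.eval τ) := by
    rw [intervalIntegral.integral_sub hg (p.continuous.intervalIntegrable 0 1), ← hbc p hp]
    simp only [mul_sub, Finset.sum_sub_distrib]
    ring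
  have hsum : |∑ i, b i * (g (c i) - p.eval (c i))| ≤ (∑ i, |b i|) * ε :=
    calc |∑ i, b i * (g (c i) - p.eval (c i))| ≤ ∑ i, |b i| * |g (c i) - p.eval (c i)| := by
          simpa only [abs_mul] using
            Finset.abs_sum_le_sum_abs (fun i => b i * (g (c i) - p.eval (c i))) univ
      _ ≤ (∑ i, |b i|) * ε := by
          rw [Finset.sum_mul]
          gcongr with i
          exact hgp _ (hc i)
  have hint : |∫ τ in (0 : ℝ)..1, (g τ - p.eval τ)| ≤ ε := by
    simpa using intervalIntegral.norm_integral_le_of_norm_le_const (a := 0) (b := 1)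
      (f := fun τ => g τ - p.eval τ) fun τ hτ => hgp τ (Ioc_subset_Icc_self (by simpa using hτ))
  rw [hsplit]
  linarith [abs_sub (∑ i, b i * (g (c i) - p.eval (c i))) (∫ τ in (0 : ℝ)..1, (g τ - p.eval τ))]

theorem exists_degree_lt_eval_eq_taylorWithinEval (g : ℝ → ℝ) (n : ℕ) (s : Set ℝ) (x₀ : ℝ) :
    ∃ p : ℝ[X], p.degree < ↑(n + 1) ∧ ∀ x, p.eval x = taylorWithinEval g n s x₀ x := by
  refine ⟨∑ k : Fin (n + 1), C (iteratedDerivWithin k g s x₀ / k !) * (X - C x₀) ^ (k : ℕ),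
    ?_, fun x => ?_⟩
  · refine (degree_sum_le _ _).trans_lt
      ((Finset.sup_lt_iff (WithBot.bot_lt_coe _)).2 fun k _ => ?_)
    calc (C (iteratedDerivWithin k g s x₀ / k !) * (X - C x₀) ^ (k : ℕ)).degree
        ≤ ((k : ℕ) : WithBot ℕ) := by compute_degree; exact le_rfl
      _ < ↑(n + 1) := by exact_mod_cast k.is_lt
  · rw [taylor_within_apply, eval_finsetSum, ← Fin.sum_univ_eq_sum_range]
    simp only [eval_mul, eval_C, eval_pow, eval_sub, eval_X, smul_eq_mul]
    exact Finset.sum_congr rfl fun k _ => by ring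

theorem abs_sub_taylorWithinEval_Icc_zero_one_le {g : ℝ → ℝ} {n : ℕ}
    (hg : ContDiffOn ℝ (n + 1) g (Icc 0 1)) {M : ℝ}
    (hM : ∀ τ ∈ Icc (0 : ℝ) 1, |iteratedDerivWithin (n + 1) g (Icc 0 1) τ| ≤ M)
    {x : ℝ} (hx : x ∈ Icc (0 : ℝ) 1) :
    |g x - taylorWithinEval g n (Icc 0 1) 0 x| ≤ M / n ! := by
  have hM0 : 0 ≤ M := (abs_nonneg _).trans (hM 0 (left_mem_Icc.mpr zero_le_one))
  calc |g x - taylorWithinEval g n (Icc 0 1) 0 x| ≤ M * (x - 0) ^ (n + 1) / n ! :=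
        taylor_mean_remainder_bound zero_le_one hg hx hM
    _ ≤ M * 1 / n ! := by
        gcongr
        exact pow_le_one₀ (by simpa using hx.1) (by simpa using hx.2)
    _ = M / n ! := by rw [mul_one]

theorem HasQuadratureOrder.abs_sum_sub_integral_le {b c : κ → ℝ} {n : ℕ}
    (hbc : HasQuadratureOrder b c (n + 1)) (hc : ∀ i, c i ∈ Icc (0 : ℝ) 1) {g : ℝ → ℝ}
    (hg : ContDiffOn ℝ (n + 1) g (Icc 0 1)) {M : ℝ}
    (hM : ∀ τ ∈ Icc (0 : ℝ) 1, |iteratedDerivWithin (n + 1) g (Icc 0 1) τ| ≤ M) :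
    |∑ i, b i * g (c i) - ∫ τ in (0 : ℝ)..1, g τ| ≤ (∑ i, |b i| + 1) * (M / n !) := by
  obtain ⟨p, hp, hpeval⟩ := exists_degree_lt_eval_eq_taylorWithinEval g n (Icc 0 1) 0
  refine hbc.abs_sum_sub_integral_le_of_abs_sub_eval_le hc
    (hg.continuousOn.intervalIntegrable_of_Icc zero_le_one) hp fun τ hτ => ?_
  rw [hpeval]
  exact abs_sub_taylorWithinEval_Icc_zero_one_le hg hM hτ

end Quadrature

theorem ContinuousMultilinearMap.abs_apply_const_le_sum_abs_pow {ι : Type*} [Fintype ι]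
    [DecidableEq ι] {n : ℕ}
    (F : ContinuousMultilinearMap ℝ (fun _ : Fin n => EuclideanSpace ℝ ι) ℝ) {L : ℝ}
    (hF : ∀ v : Fin n → ι, |F (fun j => EuclideanSpace.single (v j) 1)| ≤ L)
    (u : EuclideanSpace ℝ ι) : |F (fun _ => u)| ≤ L * (∑ k, |u k|) ^ n := by
  have hu : u = ∑ k, u k • EuclideanSpace.single k (1 : ℝ) := by
    simpa using ((EuclideanSpace.basisFun ι ℝ).sum_repr u).symm
  have hexpand : F (fun _ => u)
      = ∑ v : Fin n → ι, (∏ j, u (v j)) * F (fun j => EuclideanSpace.single (v j) 1) := by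
    conv_lhs => rw [hu]
    refine (F.toMultilinearMap.map_sum fun _ k => u k • EuclideanSpace.single k (1 : ℝ)).trans ?_
    exact Finset.sum_congr rfl fun v _ => F.map_smul_univ (fun j => u (v j)) _
  rw [hexpand, Fintype.sum_pow, Finset.mul_sum]
  refine (Finset.abs_sum_le_sum_abs _ _).trans (Finset.sum_le_sum fun v _ => ?_)
  rw [abs_mul, Finset.abs_prod, mul_comm L]
  exact mul_le_mul_of_nonneg_left (hF v) (Finset.prod_nonneg fun j _ => abs_nonneg _)

theorem EuclideanSpace.sum_abs_le_card_mul_norm {ι : Type*} [Fintype ι]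
    (u : EuclideanSpace ℝ ι) : ∑ k, |u k| ≤ Fintype.card ι * ‖u‖ := by
  simpa using Finset.sum_le_card_nsmul univ (fun k => |u k|) ‖u‖
    fun k _ => by simpa using PiLp.norm_apply_le u k

theorem iteratedDeriv_comp_add_smul {𝕜 E F : Type*} [NontriviallyNormedField 𝕜]
    [NormedAddCommGroup E] [NormedSpace 𝕜 E] [NormedAddCommGroup F] [NormedSpace 𝕜 F]
    {f : E → F} {N : WithTop ℕ∞} (hf : ContDiff 𝕜 N f) (x u : E) {k : ℕ} (hk : k ≤ N) (t : 𝕜) :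
    iteratedDeriv k (fun s => f (x + s • u)) t = iteratedFDeriv 𝕜 k f (x + t • u) (fun _ => u) := by
  induction k generalizing t with
  | zero => simp
  | succ k ih =>
    have hk' : (k : WithTop ℕ∞) + 1 ≤ N := by exact_mod_cast hk
    rw [iteratedDeriv_succ, funext (ih ((le_self_add).trans hk'))]
    exact (hf.contDiffAt.of_le hk').deriv_fderiv_add_smul

theorem Matrix.dotProduct_mulVec_self_eq_zero {R n : Type*} [CommRing R] [IsAddTorsionFree R]
    [Fintype n] {A : Matrix n n R} (hA : Aᵀ = -A) (v : n → R) : v ⬝ᵥ A *ᵥ v = 0 := by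
  refine self_eq_neg.mp ?_
  calc v ⬝ᵥ A *ᵥ v = v ⬝ᵥ Aᵀ *ᵥ v := by
        rw [mulVec_transpose, dotProduct_mulVec, dotProduct_comm]
    _ = -(v ⬝ᵥ A *ᵥ v) := by rw [hA, neg_mulVec, dotProduct_neg]

theorem Matrix.inner_toEuclideanCLM_self_eq_zero {n : Type*} [Fintype n] [DecidableEq n]
    {A : Matrix n n ℝ} (hA : Aᵀ = -A) (v : EuclideanSpace ℝ n) :
    ⟪v, toEuclideanCLM (𝕜 := ℝ) A v⟫ = 0 := by
  rw [inner_toEuclideanCLM, dotProduct_mulVec_self_eq_zero hA]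

theorem norm_sum_smul_le {ι E : Type*} [Fintype ι] [SeminormedAddCommGroup E] [NormedSpace ℝ E]
    (a : ι → ℝ) {f : ι → E} {C : ℝ} (hf : ∀ i, ‖f i‖ ≤ C) :
    ‖∑ i, a i • f i‖ ≤ (∑ i, |a i|) * C := by
  rw [Finset.sum_mul]
  refine (norm_sum_le _ _).trans (Finset.sum_le_sum fun i _ => ?_)
  rw [norm_smul, Real.norm_eq_abs]
  exact mul_le_mul_of_nonneg_left (hf i) (abs_nonneg _)

theorem norm_smul_add_sum_smul_le {ι E : Type*} [Fintype ι] [SeminormedAddCommGroup E]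
    [NormedSpace ℝ E] (h : ℝ) (w : ι → ℝ) {a : E} {t : ι → E} {C : ℝ} (ha : ‖a‖ ≤ C)
    (ht : ∀ r, ‖t r‖ ≤ C) : ‖h • a + ∑ r, w r • t r‖ ≤ C * (|h| + ∑ r, |w r|) := by
  have hsum := norm_sum_smul_le w ht
  have hsmul : ‖h • a‖ ≤ |h| * C := by
    rw [norm_smul, Real.norm_eq_abs]
    exact mul_le_mul_of_nonneg_left ha (abs_nonneg h)
  linarith [norm_add_le (h • a) (∑ r, w r • t r)]

theorem abs_sub_sub_inner_sum_smul_gradient_le {ι κ : Type*} [Fintype ι] [DecidableEq ι]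
    [Fintype κ] {b c : κ → ℝ} {n : ℕ} (hbc : HasQuadratureOrder b c (n + 1))
    (hc : ∀ i, c i ∈ Icc (0 : ℝ) 1) {I : EuclideanSpace ℝ ι → ℝ} (hI : ContDiff ℝ (n + 2) I)
    {L : ℝ} (hL0 : 0 ≤ L)
    (hL : ∀ z (v : Fin (n + 2) → ι),
      |iteratedFDeriv ℝ (n + 2) I z (fun j => EuclideanSpace.single (v j) 1)| ≤ L)
    (x u : EuclideanSpace ℝ ι) :
    |I (x + u) - I x - ⟪∑ i, b i • gradient I (x + c i • u), u⟫|
      ≤ (∑ i, |b i| + 1) * (L * (Fintype.card ι * ‖u‖) ^ (n + 2) / n !) := by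
  set f : ℝ → ℝ := fun s => I (x + s • u)
  have hf : ContDiff ℝ (n + 2) f := hI.comp (by fun_prop)
  have hderiv (τ : ℝ) : deriv f τ = ⟪gradient I (x + τ • u), u⟫ := by
    rw [inner_gradient_left, (hI.differentiable (by simp) _).deriv_comp_add_smul]
  have hFTC : ∫ τ in (0 : ℝ)..1, deriv f τ = I (x + u) - I x := by
    rw [intervalIntegral.integral_deriv_eq_sub (fun τ _ => hf.differentiable (by simp) τ)
      ((hf.continuous_deriv (le_add_left one_le_two)).intervalIntegrable 0 1)]
    simp [f]
  have hquad : ∑ i, b i * deriv f (c i) = ⟪∑ i, b i • gradient I (x + c i • u), u⟫ := by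
    simp only [hderiv, sum_inner, real_inner_smul_left]
  have hbound : ∀ τ ∈ Icc (0 : ℝ) 1, |iteratedDerivWithin (n + 1) (deriv f) (Icc 0 1) τ|
      ≤ L * (Fintype.card ι * ‖u‖) ^ (n + 2) := by
    intro τ hτ
    rw [iteratedDerivWithin_eq_iteratedDeriv (uniqueDiffOn_Icc zero_lt_one)
      hf.deriv'.contDiffAt hτ, ← iteratedDeriv_succ', iteratedDeriv_comp_add_smul hI x u le_rfl]
    refine ((iteratedFDeriv ℝ (n + 2) I (x + τ • u)).abs_apply_const_le_sum_abs_pow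
      (hL _) u).trans ?_
    gcongr
    exact EuclideanSpace.sum_abs_le_card_mul_norm u
  have := hbc.abs_sum_sub_integral_le hc hf.deriv'.contDiffOn hbound
  rwa [hquad, hFTC, abs_sub_comm] at this

/-- Pathwise drift of the invariant for the scheme with quadrature. Given a
quadrature formula of order `q ≥ 1`, an invariant `I` with `|∇I| ≤ B` and partial
derivatives of order `q+1` bounded by `L`, and skew-symmetric matrices `S(z)`, `T_r(z)`
with operator norms at most `c₀`, there is a constant `K` such that whenever
`y = x + (h S((x+y)/2) + Σ_r w_r T_r((x+y)/2)) Σ_i b_i ∇I(x + c_i(y − x))`, one has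
`|I(y) − I(x)| ≤ K (|h| + Σ_r |w_r|) |y − x|^q`. -/
theorem invariant_drift_bound_quadrature_scheme
    (d m D q : ℕ) (hq : 1 ≤ q) (b c : Fin D → ℝ)
    (hc : ∀ i, c i ∈ Set.Icc (0:ℝ) 1)
    (horder : ∀ p : Polynomial ℝ, p.degree < (q : WithBot ℕ) →
      ∑ i, b i * p.eval (c i) = ∫ τ in (0:ℝ)..1, p.eval τ)
    (I : EuclideanSpace ℝ (Fin d) → ℝ) (B L c₀ : ℝ)
    (hI : ContDiff ℝ (q + 1) I)
    (hB : ∀ z, ‖gradient I z‖ ≤ B)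
    (hL : ∀ (z : EuclideanSpace ℝ (Fin d)) (v : Fin (q + 1) → Fin d),
      |iteratedFDeriv ℝ (q + 1) I z (fun j => EuclideanSpace.single (v j) (1:ℝ))| ≤ L)
    (S : EuclideanSpace ℝ (Fin d) → Matrix (Fin d) (Fin d) ℝ)
    (T : Fin m → EuclideanSpace ℝ (Fin d) → Matrix (Fin d) (Fin d) ℝ)
    (hS : ∀ z, (S z)ᵀ = -(S z)) (hT : ∀ r z, (T r z)ᵀ = -(T r z))
    (hSnorm : ∀ z, ‖Matrix.toEuclideanCLM (𝕜 := ℝ) (S z)‖ ≤ c₀)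
    (hTnorm : ∀ r z, ‖Matrix.toEuclideanCLM (𝕜 := ℝ) (T r z)‖ ≤ c₀) :
    ∃ K : ℝ, ∀ (h : ℝ) (w : Fin m → ℝ) (x y : EuclideanSpace ℝ (Fin d)),
      y = x + Matrix.toEuclideanCLM (𝕜 := ℝ)
          (h • S ((2:ℝ)⁻¹ • (x + y)) + ∑ r, w r • T r ((2:ℝ)⁻¹ • (x + y)))
          (∑ i, b i • gradient I (x + c i • (y - x))) →
      |I y - I x| ≤ K * (|h| + ∑ r, |w r|) * ‖y - x‖ ^ q := by
  obtain ⟨n, rfl⟩ := Nat.exists_eq_add_of_le' hq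
  have hB0 : 0 ≤ B := (norm_nonneg _).trans (hB 0)
  have hc₀ : 0 ≤ c₀ := (norm_nonneg _).trans (hSnorm 0)
  set β := ∑ i, |b i|
  -- `max L 0`, not `L`: for `d = 0` the bound `hL` is vacuous and `L` may be negative.
  refine ⟨(β + 1) * (max L 0 * d ^ (n + 2) / n !) * (c₀ * (β * B)), fun h w x y hy => ?_⟩
  set z := (2 : ℝ)⁻¹ • (x + y)
  set A := h • S z + ∑ r, w r • T r z
  set v := ∑ i, b i • gradient I (x + c i • (y - x))
  have hyx : y - x = toEuclideanCLM (𝕜 := ℝ) A v := sub_eq_of_eq_add' hy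
  have hskew : Aᵀ = -A := by
    simp only [A, transpose_add, transpose_smul, transpose_sum, hS, hT, smul_neg, sum_neg_distrib,
      neg_add]
  have hinner : ⟪v, y - x⟫ = 0 := by
    rw [hyx, inner_toEuclideanCLM_self_eq_zero hskew]
  have hdrift : |I y - I x| ≤ (β + 1) * (max L 0 * (d * ‖y - x‖) ^ (n + 2) / n !) := by
    have := abs_sub_sub_inner_sum_smul_gradient_le horder hc (hI.of_le (by norm_cast))
      (le_max_right L 0) (fun z v => (hL z v).trans (le_max_left L 0)) x (y - x)
    rwa [add_sub_cancel, hinner, sub_zero, Fintype.card_fin] at this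
  have hu : ‖y - x‖ ≤ c₀ * (|h| + ∑ r, |w r|) * (β * B) := by
    have hA : ‖toEuclideanCLM (𝕜 := ℝ) A‖ ≤ c₀ * (|h| + ∑ r, |w r|) := by
      simpa only [A, map_add, map_smul, map_sum] using
        norm_smul_add_sum_smul_le h w (hSnorm z) fun r => hTnorm r z
    rw [hyx]
    exact (ContinuousLinearMap.le_opNorm _ v).trans
      (mul_le_mul hA (norm_sum_smul_le b fun i => hB _) (norm_nonneg _) (by positivity))
  calc |I y - I x| ≤ (β + 1) * (max L 0 * d ^ (n + 2) / n !) * ‖y - x‖ * ‖y - x‖ ^ (n + 1) := by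
        convert hdrift using 1; ring
    _ ≤ (β + 1) * (max L 0 * d ^ (n + 2) / n !) * (c₀ * (|h| + ∑ r, |w r|) * (β * B))
          * ‖y - x‖ ^ (n + 1) := by gcongr
    _ = _ := by ring
end

section
/- Let γ be the standard Gaussian measure on ℝ (mean 0, variance 1), and for h ∈ (0,1) set A_h = √(4 |ln h|) and clamp_{A_h}(x) = max(−A_h, min(A_h, x)). Then there exists a constant K > 0 such that for all h ∈ (0,1), ∫_ℝ (√h·x − √h·clamp_{A_h}(x))² dγ(x) ≤ K h³; i.e., the mean-square distance between the Wiener increment ΔW = √h·ξ and its truncation ΔŴ = √h·clamp_{A_h}(ξ) satisfies E|ΔŴ − ΔW|² ≤ K h³. -/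
open MeasureTheory ProbabilityTheory
open scoped NNReal ENNReal

lemma aux_sq_le_two_exp (t : ℝ) : t ^ 2 ≤ 2 * Real.exp (t ^ 2 / 4) := by
  have h1 : t ^ 2 / 8 + 1 ≤ Real.exp (t ^ 2 / 8) := Real.add_one_le_exp _
  have h2 : Real.exp (t ^ 2 / 4) = Real.exp (t ^ 2 / 8) * Real.exp (t ^ 2 / 8) := by
    rw [← Real.exp_add]; ring_nf
  nlinarith [sq_nonneg (t ^ 2 / 8 - 1), Real.exp_pos (t ^ 2 / 8)]

lemma aux_core (t : ℝ) : t ^ 2 * Real.exp (-t ^ 2 / 2) ≤ 2 * Real.exp (-t ^ 2 / 4) := by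
  have h1 := aux_sq_le_two_exp t
  have h2 : Real.exp (t ^ 2 / 4) * Real.exp (-t ^ 2 / 2) = Real.exp (-t ^ 2 / 4) := by
    rw [← Real.exp_add]; ring_nf
  have h3 : (0:ℝ) < Real.exp (-t ^ 2 / 2) := Real.exp_pos _
  calc t ^ 2 * Real.exp (-t ^ 2 / 2)
      ≤ (2 * Real.exp (t ^ 2 / 4)) * Real.exp (-t ^ 2 / 2) :=
        mul_le_mul_of_nonneg_right h1 h3.le
    _ = 2 * Real.exp (-t ^ 2 / 4) := by rw [mul_assoc, h2]

lemma aux_tail (A x t : ℝ) (hx : t ^ 2 + A ^ 2 ≤ x ^ 2) :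
    t ^ 2 * Real.exp (-x ^ 2 / 2)
      ≤ Real.exp (-A ^ 2 / 2) * (2 * Real.exp (-t ^ 2 / 4)) := by
  have h1 : Real.exp (-x ^ 2 / 2) ≤ Real.exp (-t ^ 2 / 2) * Real.exp (-A ^ 2 / 2) := by
    rw [← Real.exp_add]
    exact Real.exp_le_exp.mpr (by linarith)
  calc t ^ 2 * Real.exp (-x ^ 2 / 2)
      ≤ t ^ 2 * (Real.exp (-t ^ 2 / 2) * Real.exp (-A ^ 2 / 2)) :=
        mul_le_mul_of_nonneg_left h1 (sq_nonneg t)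
    _ = (t ^ 2 * Real.exp (-t ^ 2 / 2)) * Real.exp (-A ^ 2 / 2) := by ring
    _ ≤ (2 * Real.exp (-t ^ 2 / 4)) * Real.exp (-A ^ 2 / 2) :=
        mul_le_mul_of_nonneg_right (aux_core t) (Real.exp_pos _).le
    _ = Real.exp (-A ^ 2 / 2) * (2 * Real.exp (-t ^ 2 / 4)) := by ring

lemma aux_key (A : ℝ) (hA : 0 ≤ A) (x : ℝ) :
    (x - max (-A) (min A x)) ^ 2 * Real.exp (-x ^ 2 / 2)
      ≤ Real.exp (-A ^ 2 / 2)
          * (2 * (Real.exp (-(x - A) ^ 2 / 4) + Real.exp (-(x + A) ^ 2 / 4))) := by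
  rcases le_total x (-A) with hle | hge
  · -- x ≤ -A : clamp = -A
    have hmin : min A x = x := min_eq_right (by linarith)
    have hmax : max (-A) x = -A := max_eq_left hle
    rw [hmin, hmax]
    have ht : x + A ≤ 0 := by linarith
    have hx : (x + A) ^ 2 + A ^ 2 ≤ x ^ 2 := by nlinarith [mul_nonneg hA (neg_nonneg.mpr ht)]
    have h1 := aux_tail A x (x + A) hx
    have h2 : x - -A = x + A := by ring
    rw [h2]
    have h3 : (0:ℝ) ≤ Real.exp (-A ^ 2 / 2) * (2 * Real.exp (-(x - A) ^ 2 / 4)) := by positivity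
    nlinarith [h1, h3]
  · rcases le_total A x with hge2 | hle2
    · -- x ≥ A : clamp = A
      have hmin : min A x = A := min_eq_left hge2
      rw [hmin, max_eq_right (by linarith : -A ≤ A)]
      have ht : 0 ≤ x - A := by linarith
      have hx : (x - A) ^ 2 + A ^ 2 ≤ x ^ 2 := by nlinarith [mul_nonneg hA ht]
      have h1 := aux_tail A x (x - A) hx
      have h3 : (0:ℝ) ≤ Real.exp (-A ^ 2 / 2) * (2 * Real.exp (-(x + A) ^ 2 / 4)) := by
        positivity
      nlinarith [h1, h3]
    · -- -A ≤ x ≤ A : clamp = x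
      have hmin : min A x = x := min_eq_right hle2
      have hmax : max (-A) x = x := max_eq_right hge
      rw [hmin, hmax]
      have : x - x = 0 := sub_self x
      rw [this]
      have : (0:ℝ) ^ 2 * Real.exp (-x ^ 2 / 2) = 0 := by ring
      rw [this]
      positivity

/-- Mean-square distance between the Wiener increment and its truncation.
With `A_h = √(4|ln h|)` and `clamp_A(x) = max(−A, min(A, x))`, there is `K > 0` with
`∫ (√h·x − √h·clamp_{A_h}(x))² dγ ≤ K h³` for all `h ∈ (0,1)`. -/
theorem mean_square_truncation_error
    : ∃ K : ℝ, 0 < K ∧ ∀ h ∈ Set.Ioo (0:ℝ) 1,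
      ∫ x, (Real.sqrt h * x
          - Real.sqrt h * max (-(Real.sqrt (4 * |Real.log h|)))
              (min (Real.sqrt (4 * |Real.log h|)) x)) ^ 2 ∂(gaussianReal 0 1)
        ≤ K * h ^ 3 := by
  refine ⟨8, by norm_num, ?_⟩
  rintro h ⟨h0, h1⟩
  set A : ℝ := Real.sqrt (4 * |Real.log h|) with hAdef
  have hA : 0 ≤ A := Real.sqrt_nonneg _
  have hlog : Real.log h < 0 := Real.log_neg h0 h1
  have hA2 : A ^ 2 = 4 * |Real.log h| := Real.sq_sqrt (by positivity)
  have hexpA : Real.exp (-A ^ 2 / 2) = h ^ 2 := by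
    rw [hA2, abs_of_neg hlog]
    have : -(4 * -Real.log h) / 2 = Real.log h + Real.log h := by ring
    rw [this, Real.exp_add, Real.exp_log h0]
    ring
  -- rewrite the Gaussian integral as a Lebesgue integral against the density
  have hγ : gaussianReal 0 1
      = volume.withDensity (fun x => ((Real.toNNReal (gaussianPDFReal 0 1 x) : ℝ≥0) : ℝ≥0∞)) := by
    rw [gaussianReal_of_var_ne_zero 0 one_ne_zero]
    rfl
  rw [hγ, integral_withDensity_eq_integral_smul
    ((measurable_gaussianPDFReal 0 1).real_toNNReal) _]
  -- dominating function
  set g : ℝ → ℝ := fun x => h ^ 3 * ((Real.sqrt (2 * Real.pi))⁻¹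
      * (2 * (Real.exp (-(x - A) ^ 2 / 4) + Real.exp (-(x + A) ^ 2 / 4)))) with hgdef
  have hint_base : Integrable (fun y : ℝ => Real.exp (-(4⁻¹ : ℝ) * y ^ 2)) :=
    integrable_exp_neg_mul_sq (by norm_num)
  have hcomp1 : Integrable (fun x : ℝ => Real.exp (-(x - A) ^ 2 / 4)) := by
    have := hint_base.comp_sub_right A
    convert this using 2 with x
    ring_nf
  have hcomp2 : Integrable (fun x : ℝ => Real.exp (-(x + A) ^ 2 / 4)) := by
    have := hint_base.comp_add_right A
    convert this using 2 with x
    ring_nf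
  have hg_int : Integrable g := by
    refine (((hcomp1.add hcomp2).const_mul 2).const_mul _).const_mul _
  have hpdf : ∀ x : ℝ, gaussianPDFReal 0 1 x
      = (Real.sqrt (2 * Real.pi))⁻¹ * Real.exp (-x ^ 2 / 2) := by
    intro x
    simp only [gaussianPDFReal]
    norm_num
  have hsπ : (2:ℝ) ≤ Real.sqrt (2 * Real.pi) := by
    have : (4:ℝ) ≤ 2 * Real.pi := by nlinarith [Real.pi_gt_three]
    calc (2:ℝ) = Real.sqrt 4 := by
          rw [show (4:ℝ) = 2 ^ 2 by norm_num, Real.sqrt_sq (by norm_num)]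
      _ ≤ Real.sqrt (2 * Real.pi) := Real.sqrt_le_sqrt this
  have hsπ_inv : (Real.sqrt (2 * Real.pi))⁻¹ ≤ 1 / 2 := by
    rw [inv_le_iff_one_le_mul₀ (by linarith)]
    linarith
  -- pointwise bound
  have hpoint : ∀ x : ℝ,
      (Real.toNNReal (gaussianPDFReal 0 1 x) : ℝ≥0)
        • (Real.sqrt h * x - Real.sqrt h * max (-A) (min A x)) ^ 2 ≤ g x := by
    intro x
    rw [NNReal.smul_def, Real.coe_toNNReal _ (gaussianPDFReal_nonneg 0 1 x), hpdf x, smul_eq_mul]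
    have hsq : (Real.sqrt h * x - Real.sqrt h * max (-A) (min A x)) ^ 2
        = h * (x - max (-A) (min A x)) ^ 2 := by
      have : Real.sqrt h * x - Real.sqrt h * max (-A) (min A x)
          = Real.sqrt h * (x - max (-A) (min A x)) := by ring
      rw [this, mul_pow, Real.sq_sqrt h0.le]
    rw [hsq]
    have hk := aux_key A hA x
    rw [hexpA] at hk
    have h2 : (Real.sqrt (2 * Real.pi))⁻¹ * Real.exp (-x ^ 2 / 2)
          * (h * (x - max (-A) (min A x)) ^ 2)
        = h * (Real.sqrt (2 * Real.pi))⁻¹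
          * ((x - max (-A) (min A x)) ^ 2 * Real.exp (-x ^ 2 / 2)) := by ring
    rw [h2]
    simp only [hgdef]
    have h3 : h ^ 3 * ((Real.sqrt (2 * Real.pi))⁻¹
          * (2 * (Real.exp (-(x - A) ^ 2 / 4) + Real.exp (-(x + A) ^ 2 / 4))))
        = h * (Real.sqrt (2 * Real.pi))⁻¹
          * (h ^ 2 * (2 * (Real.exp (-(x - A) ^ 2 / 4) + Real.exp (-(x + A) ^ 2 / 4)))) := by
      ring
    rw [h3]
    have hpos : (0:ℝ) ≤ h * (Real.sqrt (2 * Real.pi))⁻¹ := by positivity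
    exact mul_le_mul_of_nonneg_left hk hpos
  have hnonneg : ∀ x : ℝ, (0:ℝ) ≤ (Real.toNNReal (gaussianPDFReal 0 1 x) : ℝ≥0)
      • (Real.sqrt h * x - Real.sqrt h * max (-A) (min A x)) ^ 2 := by
    intro x
    rw [NNReal.smul_def]
    positivity
  have hmono := integral_mono_of_nonneg (ae_of_all _ hnonneg) hg_int (ae_of_all _ hpoint)
  refine hmono.trans ?_
  -- compute / bound the integral of g
  have hI1 : ∫ x : ℝ, Real.exp (-(x - A) ^ 2 / 4) = Real.sqrt (Real.pi / 4⁻¹) := by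
    have heq : (fun x : ℝ => Real.exp (-(x - A) ^ 2 / 4))
        = fun x : ℝ => (fun y : ℝ => Real.exp (-(4⁻¹ : ℝ) * y ^ 2)) (x - A) := by
      funext x; ring_nf
    rw [heq, integral_sub_right_eq_self (fun y : ℝ => Real.exp (-(4⁻¹ : ℝ) * y ^ 2)) A,
      integral_gaussian]
  have hI2 : ∫ x : ℝ, Real.exp (-(x + A) ^ 2 / 4) = Real.sqrt (Real.pi / 4⁻¹) := by
    have heq : (fun x : ℝ => Real.exp (-(x + A) ^ 2 / 4))
        = fun x : ℝ => (fun y : ℝ => Real.exp (-(4⁻¹ : ℝ) * y ^ 2)) (x + A) := by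
      funext x; ring_nf
    rw [heq, integral_add_right_eq_self (fun y : ℝ => Real.exp (-(4⁻¹ : ℝ) * y ^ 2)) A,
      integral_gaussian]
  have hsum : ∫ x : ℝ, (Real.exp (-(x - A) ^ 2 / 4) + Real.exp (-(x + A) ^ 2 / 4))
      = 2 * Real.sqrt (Real.pi / 4⁻¹) := by
    rw [integral_add hcomp1 hcomp2, hI1, hI2]; ring
  have hIg : ∫ x : ℝ, g x
      = h ^ 3 * ((Real.sqrt (2 * Real.pi))⁻¹ * (2 * (2 * Real.sqrt (Real.pi / 4⁻¹)))) := by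
    simp_rw [hgdef]
    rw [integral_const_mul, integral_const_mul, integral_const_mul, hsum]
  rw [hIg]
  have hs4 : Real.sqrt (Real.pi / 4⁻¹) ≤ 4 := by
    have : Real.pi / 4⁻¹ ≤ 16 := by
      have hq : Real.pi / 4⁻¹ = 4 * Real.pi := by ring
      rw [hq]; nlinarith [Real.pi_le_four]
    calc Real.sqrt (Real.pi / 4⁻¹) ≤ Real.sqrt 16 := Real.sqrt_le_sqrt this
      _ = 4 := by rw [show (16:ℝ) = 4 ^ 2 by norm_num, Real.sqrt_sq (by norm_num)]
  have hconst : (Real.sqrt (2 * Real.pi))⁻¹ * (2 * (2 * Real.sqrt (Real.pi / 4⁻¹))) ≤ 8 := by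
    have hsnn : (0:ℝ) ≤ Real.sqrt (Real.pi / 4⁻¹) := Real.sqrt_nonneg _
    have h4 : 2 * (2 * Real.sqrt (Real.pi / 4⁻¹)) ≤ 16 := by linarith
    have hinv_nn : (0:ℝ) ≤ (Real.sqrt (2 * Real.pi))⁻¹ := by positivity
    calc (Real.sqrt (2 * Real.pi))⁻¹ * (2 * (2 * Real.sqrt (Real.pi / 4⁻¹)))
        ≤ (Real.sqrt (2 * Real.pi))⁻¹ * 16 := by
          exact mul_le_mul_of_nonneg_left h4 hinv_nn
      _ ≤ (1 / 2) * 16 := by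
          exact mul_le_mul_of_nonneg_right hsπ_inv (by norm_num)
      _ = 8 := by norm_num
  calc h ^ 3 * ((Real.sqrt (2 * Real.pi))⁻¹ * (2 * (2 * Real.sqrt (Real.pi / 4⁻¹))))
      ≤ h ^ 3 * 8 := mul_le_mul_of_nonneg_left hconst (by positivity)
    _ = 8 * h ^ 3 := by ring
end

section
/- Let γ be the standard Gaussian measure on ℝ (mean 0, variance 1), and for h ∈ (0,1) set A_h = √(4 |ln h|) and clamp_{A_h}(x) = max(−A_h, min(A_h, x)). Then there exists a constant K > 0 such that for all h ∈ (0,1), 0 ≤ ∫_ℝ (√h·x)² dγ(x) − ∫_ℝ (√h·clamp_{A_h}(x))² dγ(x) ≤ K h³; i.e., |E((ΔŴ)²) − E((ΔW)²)| ≤ K h³ for the truncated increment ΔŴ = √h·clamp_{A_h}(ξ) and the Wiener increment ΔW = √h·ξ. -/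
/-!
The difference of the two second moments is `h · E[(ξ² − A²)₊]`. Where `|x| > A`, the Gaussian
factor splits as `e^{-x²/2} = e^{-A²/2} e^{-t/2}` with `t = x² − A² ≥ (|x| − A)²`, and
`t e^{-t/2} ≤ 4 e^{-t/4}`. Hence `(x² − A²)₊` times the standard normal density is at most
`8 e^{-A²/2}` times the sum of the `N(±A, 2)` densities, so `E[(ξ² − A²)₊] ≤ 16 e^{-A²/2} = 16 h²`.
-/

open MeasureTheory ProbabilityTheory Real

lemma mul_exp_neg_half_le (t : ℝ) : t * exp (-t / 2) ≤ 4 * exp (-t / 4) :=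
  calc t * exp (-t / 2) ≤ 4 * exp (t / 4) * exp (-t / 2) := by
        gcongr; linarith [add_one_le_exp (t / 4)]
    _ = 4 * exp (-t / 4) := by rw [mul_assoc, ← exp_add]; ring_nf

lemma max_sq_sub_sq_mul_exp_le {A : ℝ} (hA : 0 ≤ A) (x : ℝ) :
    max (x ^ 2 - A ^ 2) 0 * exp (-x ^ 2 / 2) ≤
      4 * exp (-A ^ 2 / 2) * (exp (-(x - A) ^ 2 / 4) + exp (-(x + A) ^ 2 / 4)) := by
  rcases le_total (x ^ 2) (A ^ 2) with hxA | hxA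
  · rw [max_eq_right (by linarith), zero_mul]
    positivity
  rw [max_eq_left (by linarith)]
  have hshift : exp (-(x ^ 2 - A ^ 2) / 4) ≤
      exp (-(x - A) ^ 2 / 4) + exp (-(x + A) ^ 2 / 4) := by
    rcases le_total 0 x with hx | hx
    · have hAx : A ≤ x := by nlinarith
      have : exp (-(x ^ 2 - A ^ 2) / 4) ≤ exp (-(x - A) ^ 2 / 4) := by
        gcongr; nlinarith [mul_nonneg hA (sub_nonneg.2 hAx)]
      linarith [exp_pos (-(x + A) ^ 2 / 4)]
    · have hAx : A ≤ -x := by nlinarith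
      have : exp (-(x ^ 2 - A ^ 2) / 4) ≤ exp (-(x + A) ^ 2 / 4) := by
        gcongr; nlinarith [mul_nonneg hA (sub_nonneg.2 hAx)]
      linarith [exp_pos (-(x - A) ^ 2 / 4)]
  calc (x ^ 2 - A ^ 2) * exp (-x ^ 2 / 2)
      = exp (-A ^ 2 / 2) * ((x ^ 2 - A ^ 2) * exp (-(x ^ 2 - A ^ 2) / 2)) := by
        rw [mul_left_comm, ← exp_add]; ring_nf
    _ ≤ exp (-A ^ 2 / 2) * (4 * exp (-(x ^ 2 - A ^ 2) / 4)) :=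
        mul_le_mul_of_nonneg_left (mul_exp_neg_half_le _) (exp_pos _).le
    _ ≤ _ := by rw [mul_left_comm, ← mul_assoc]; gcongr

lemma inv_sqrt_two_pi_le : (√(2 * π))⁻¹ ≤ 2 * (√(2 * π * 2))⁻¹ := by
  have h : √(2 * π * 2) ≤ 2 * √(2 * π) :=
    calc √(2 * π * 2) ≤ √(2 ^ 2 * (2 * π)) := sqrt_le_sqrt (by nlinarith [pi_pos])
      _ = 2 * √(2 * π) := by rw [sqrt_mul (by norm_num), sqrt_sq (by norm_num)]
  rw [← div_eq_mul_inv, ← inv_div]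
  exact inv_anti₀ (by positivity) (by linarith)

lemma gaussianPDFReal_mul_max_sq_sub_sq_le {A : ℝ} (hA : 0 ≤ A) (x : ℝ) :
    gaussianPDFReal 0 1 x * max (x ^ 2 - A ^ 2) 0 ≤
      8 * exp (-A ^ 2 / 2) * (gaussianPDFReal A 2 x + gaussianPDFReal (-A) 2 x) := by
  have h01 : gaussianPDFReal 0 1 x = (√(2 * π))⁻¹ * exp (-x ^ 2 / 2) := by
    simp [gaussianPDFReal]
  have h2 : ∀ m, gaussianPDFReal m 2 x = (√(2 * π * 2))⁻¹ * exp (-(x - m) ^ 2 / 4) := by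
    intro m; simp only [gaussianPDFReal]; norm_num
  rw [h01, h2, h2, sub_neg_eq_add]
  calc (√(2 * π))⁻¹ * exp (-x ^ 2 / 2) * max (x ^ 2 - A ^ 2) 0
      = (√(2 * π))⁻¹ * (max (x ^ 2 - A ^ 2) 0 * exp (-x ^ 2 / 2)) := by ring
    _ ≤ 2 * (√(2 * π * 2))⁻¹ *
          (4 * exp (-A ^ 2 / 2) * (exp (-(x - A) ^ 2 / 4) + exp (-(x + A) ^ 2 / 4))) :=
        mul_le_mul inv_sqrt_two_pi_le (max_sq_sub_sq_mul_exp_le hA x)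
          (by positivity) (by positivity)
    _ = _ := by ring

lemma integral_max_sq_sub_sq_gaussianReal_le {A : ℝ} (hA : 0 ≤ A) :
    ∫ x, max (x ^ 2 - A ^ 2) 0 ∂(gaussianReal 0 1) ≤ 16 * exp (-A ^ 2 / 2) := by
  have hint : Integrable (fun x ↦ gaussianPDFReal A 2 x + gaussianPDFReal (-A) 2 x) :=
    (integrable_gaussianPDFReal A 2).add (integrable_gaussianPDFReal (-A) 2)
  rw [integral_gaussianReal_eq_integral_smul one_ne_zero]
  calc ∫ x, gaussianPDFReal 0 1 x • max (x ^ 2 - A ^ 2) 0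
      ≤ ∫ x, 8 * exp (-A ^ 2 / 2) * (gaussianPDFReal A 2 x + gaussianPDFReal (-A) 2 x) :=
        integral_mono_of_nonneg
          (.of_forall fun x ↦ mul_nonneg (gaussianPDFReal_nonneg 0 1 x) (le_max_right _ _))
          (hint.const_mul _) (.of_forall (gaussianPDFReal_mul_max_sq_sub_sq_le hA))
    _ = 16 * exp (-A ^ 2 / 2) := by
        rw [integral_const_mul, integral_add (integrable_gaussianPDFReal A 2)
          (integrable_gaussianPDFReal (-A) 2), integral_gaussianPDFReal_eq_one _ two_ne_zero,
          integral_gaussianPDFReal_eq_one _ two_ne_zero]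
        ring

lemma sq_sub_sq_clamp {A : ℝ} (hA : 0 ≤ A) (x : ℝ) :
    x ^ 2 - max (-A) (min A x) ^ 2 = max (x ^ 2 - A ^ 2) 0 := by
  rcases le_total x (-A) with hx | hx
  · rw [min_eq_right (by linarith), max_eq_left hx, max_eq_left (by nlinarith)]
    ring
  rcases le_total x A with hx' | hx'
  · rw [min_eq_right hx', max_eq_right hx, max_eq_right (by nlinarith)]
    ring
  · rw [min_eq_left hx', max_eq_right (by linarith), max_eq_left (by nlinarith)]

lemma integral_mul_sq_sub_integral_mul_clamp_sq {μ : Measure ℝ} [IsFiniteMeasure μ]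
    (hμ : Integrable (fun x ↦ x ^ 2) μ) {A : ℝ} (hA : 0 ≤ A) (c : ℝ) :
    ∫ x, (c * x) ^ 2 ∂μ - ∫ x, (c * max (-A) (min A x)) ^ 2 ∂μ
      = c ^ 2 * ∫ x, max (x ^ 2 - A ^ 2) 0 ∂μ := by
  have hclamp : Integrable (fun x ↦ max (-A) (min A x) ^ 2) μ := by
    refine .of_bound (by fun_prop) (A ^ 2) (.of_forall fun x ↦ ?_)
    rw [norm_pow, norm_eq_abs, sq_abs]
    exact sq_le_sq' (le_max_left _ _) (max_le (by linarith) (min_le_left _ _))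
  simp only [mul_pow, integral_const_mul]
  rw [← mul_sub, ← integral_sub hμ hclamp]
  simp only [sq_sub_sq_clamp hA]

/-- Second moments of Wiener increments and their truncations. With
`A_h = √(4|ln h|)` and `clamp_A(x) = max(−A, min(A, x))`, there is `K > 0` such that for
all `h ∈ (0,1)`,
`0 ≤ ∫ (√h·x)² dγ − ∫ (√h·clamp_{A_h}(x))² dγ ≤ K h³`. -/
theorem second_moment_truncation_error
    : ∃ K : ℝ, 0 < K ∧ ∀ h ∈ Set.Ioo (0:ℝ) 1,
      0 ≤ (∫ x, (Real.sqrt h * x) ^ 2 ∂(gaussianReal 0 1))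
          - ∫ x, (Real.sqrt h * max (-(Real.sqrt (4 * |Real.log h|)))
              (min (Real.sqrt (4 * |Real.log h|)) x)) ^ 2 ∂(gaussianReal 0 1) ∧
        (∫ x, (Real.sqrt h * x) ^ 2 ∂(gaussianReal 0 1))
          - (∫ x, (Real.sqrt h * max (-(Real.sqrt (4 * |Real.log h|)))
              (min (Real.sqrt (4 * |Real.log h|)) x)) ^ 2 ∂(gaussianReal 0 1))
          ≤ K * h ^ 3 := by
  refine ⟨16, by norm_num, fun h ⟨h0, h1⟩ ↦ ?_⟩
  set A := √(4 * |log h|)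
  have hA : 0 ≤ A := sqrt_nonneg _
  have hexp : exp (-A ^ 2 / 2) = h ^ 2 := by
    rw [sq_sqrt (by positivity), abs_of_neg (log_neg h0 h1),
      show -(4 * -log h) / 2 = log (h ^ 2) by rw [log_pow]; push_cast; ring,
      exp_log (by positivity)]
  rw [integral_mul_sq_sub_integral_mul_clamp_sq ((memLp_id_gaussianReal 2).integrable_sq) hA,
    sq_sqrt h0.le]
  refine ⟨mul_nonneg h0.le (integral_nonneg fun x ↦ le_max_right _ _), ?_⟩
  calc h * ∫ x, max (x ^ 2 - A ^ 2) 0 ∂(gaussianReal 0 1) ≤ h * (16 * h ^ 2) := by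
        rw [← hexp]
        exact mul_le_mul_of_nonneg_left (integral_max_sq_sub_sq_gaussianReal_le hA) h0.le
    _ = 16 * h ^ 3 := by ring
end

section
/- Let γ ⊗ γ be the product of two copies of the standard Gaussian measure on ℝ, and for h ∈ (0,1) set A_h = √(4 |ln h|) and clamp_{A_h}(x) = max(−A_h, min(A_h, x)). Then there exists a constant K > 0 such that for all h ∈ (0,1), ∫_{ℝ²} (h·clamp_{A_h}(x₁)·clamp_{A_h}(x₂) − h·x₁·x₂)² d(γ ⊗ γ)(x₁, x₂) ≤ K h³; i.e., for two independent Wiener increments ΔW_r = √h·ξ_r and their truncations ΔŴ_r = √h·clamp_{A_h}(ξ_r), one has E|ΔŴ₁ΔŴ₂ − ΔW₁ΔW₂|² ≤ K h³. -/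
open MeasureTheory ProbabilityTheory Real

lemma clamp_sq_le {A x : ℝ} (hA : 0 ≤ A) : (max (-A) (min A x)) ^ 2 ≤ x ^ 2 := by
  rcases le_total x (-A) with h | h
  · rw [min_eq_right (h.trans (by linarith)), max_eq_left h]
    nlinarith
  rcases le_total A x with h2 | h2
  · rw [min_eq_left h2, max_eq_right (by linarith)]
    nlinarith
  · rw [min_eq_right h2, max_eq_right h]

lemma diff_sq_le {A x : ℝ} (hA : 0 ≤ A) :
    (x - max (-A) (min A x)) ^ 2 ≤ x ^ 2 * Real.exp (x ^ 2 / 4 - A ^ 2 / 4) := by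
  rcases le_total x (-A) with h | h
  · rw [min_eq_right (h.trans (by linarith)), max_eq_left h]
    have h1 : A ^ 2 ≤ x ^ 2 := by nlinarith
    have h2 : (1:ℝ) ≤ Real.exp (x ^ 2 / 4 - A ^ 2 / 4) := Real.one_le_exp (by linarith)
    nlinarith [sq_nonneg x, sq_nonneg (x + A)]
  rcases le_total A x with h2 | h2
  · rw [min_eq_left h2, max_eq_right (by linarith)]
    have h1 : A ^ 2 ≤ x ^ 2 := by nlinarith
    have h3 : (1:ℝ) ≤ Real.exp (x ^ 2 / 4 - A ^ 2 / 4) := Real.one_le_exp (by linarith)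
    nlinarith [sq_nonneg x, sq_nonneg (x - A)]
  · rw [min_eq_right h2, max_eq_right h]
    have : (0:ℝ) ≤ x ^ 2 * Real.exp (x ^ 2 / 4 - A ^ 2 / 4) := by positivity
    simpa using this

lemma integrable_aux :
    Integrable (fun x : ℝ => x ^ 2 * Real.exp (x ^ 2 / 4)) (gaussianReal 0 1) := by
  rw [gaussianReal_of_var_ne_zero 0 one_ne_zero,
    integrable_withDensity_iff (measurable_gaussianPDF 0 1)
      (ae_of_all _ fun x => ENNReal.ofReal_lt_top)]
  have hfun : (fun x : ℝ => x ^ 2 * Real.exp (x ^ 2 / 4) * (gaussianPDF 0 1 x).toReal)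
      = fun x : ℝ => (Real.sqrt (2 * π))⁻¹ * (x ^ 2 * Real.exp (-(4:ℝ)⁻¹ * x ^ 2)) := by
    funext x
    rw [gaussianPDF, ENNReal.toReal_ofReal (gaussianPDFReal_nonneg 0 1 x), gaussianPDFReal]
    push_cast
    have hexp : Real.exp (x ^ 2 / 4) * Real.exp (-(x - 0) ^ 2 / (2 * 1)) =
        Real.exp (-(4:ℝ)⁻¹ * x ^ 2) := by
      rw [← Real.exp_add]; congr 1; ring
    calc x ^ 2 * rexp (x ^ 2 / 4) * ((√(2 * π * 1))⁻¹ * rexp (-(x - 0) ^ 2 / (2 * 1)))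
        = (√(2 * π * 1))⁻¹ * (x ^ 2 * (rexp (x ^ 2 / 4) * rexp (-(x - 0) ^ 2 / (2 * 1)))) := by
          ring
      _ = _ := by rw [hexp, mul_one]
  rw [hfun]
  have := (integrable_rpow_mul_exp_neg_mul_sq (b := (4:ℝ)⁻¹) (s := 2) (by norm_num)
    (by norm_num)).const_mul (√(2 * π))⁻¹
  refine this.congr (ae_of_all _ fun x => ?_)
  have : x ^ (2:ℝ) = x ^ (2:ℕ) := by
    rw [← Real.rpow_natCast x 2]; norm_num
  simp only [this]

lemma integrable_sq : Integrable (fun x : ℝ => x ^ 2) (gaussianReal 0 1) := by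
  refine integrable_aux.mono ((continuous_pow 2).aestronglyMeasurable) (ae_of_all _ fun x => ?_)
  simp only [norm_mul, Real.norm_eq_abs]
  have h1 : (1:ℝ) ≤ Real.exp (x ^ 2 / 4) := Real.one_le_exp (by positivity)
  calc |x ^ 2| ≤ |x ^ 2| * |Real.exp (x ^ 2 / 4)| := by
        rw [abs_of_pos (Real.exp_pos _)]; nlinarith [abs_nonneg (x^2)]
    _ = _ := rfl

/-- Mean-square closeness of products of truncated increments. With
`A_h = √(4|ln h|)`, `clamp_A(x) = max(−A, min(A, x))` and `γ ⊗ γ` the product of two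
standard Gaussian measures, there is `K > 0` such that for all `h ∈ (0,1)`,
`∫ (h·clamp_{A_h}(x₁)·clamp_{A_h}(x₂) − h·x₁·x₂)² d(γ ⊗ γ) ≤ K h³`. -/
theorem product_truncation_error
    : ∃ K : ℝ, 0 < K ∧ ∀ h ∈ Set.Ioo (0:ℝ) 1,
      ∫ p : ℝ × ℝ,
          (h * (max (-(Real.sqrt (4 * |Real.log h|)))
                  (min (Real.sqrt (4 * |Real.log h|)) p.1)
              * max (-(Real.sqrt (4 * |Real.log h|)))
                  (min (Real.sqrt (4 * |Real.log h|)) p.2))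
            - h * (p.1 * p.2)) ^ 2
        ∂((gaussianReal 0 1).prod (gaussianReal 0 1))
        ≤ K * h ^ 3 := by
  set γ := gaussianReal 0 1
  set S := ∫ x : ℝ, x ^ 2 ∂γ with hS
  set M := ∫ x : ℝ, x ^ 2 * Real.exp (x ^ 2 / 4) ∂γ with hM
  have hS0 : 0 ≤ S := integral_nonneg fun x => by positivity
  have hM0 : 0 ≤ M := integral_nonneg fun x => by positivity
  refine ⟨4 * (S + 1) * (M + 1), by positivity, fun h hh => ?_⟩
  obtain ⟨h0, h1⟩ := hh
  set A := Real.sqrt (4 * |Real.log h|) with hAdef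
  have hA : 0 ≤ A := Real.sqrt_nonneg _
  have hA2 : A ^ 2 = 4 * |Real.log h| := Real.sq_sqrt (by positivity)
  have hexpA : Real.exp (-(A ^ 2) / 4) = h := by
    rw [hA2, abs_of_nonpos (Real.log_nonpos h0.le h1.le)]
    rw [show -(4 * -Real.log h) / 4 = Real.log h by ring, Real.exp_log h0]
  set c : ℝ → ℝ := fun x => max (-A) (min A x) with hc
  set d : ℝ → ℝ := fun x => x - c x with hd
  have hccont : Continuous c := (continuous_const.max (continuous_const.min continuous_id))
  have hdcont : Continuous d := continuous_id.sub hccont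
  -- 1D bound: d x ^ 2 ≤ h * (x^2 * exp (x^2/4))
  have hdbound : ∀ x : ℝ, d x ^ 2 ≤ h * (x ^ 2 * Real.exp (x ^ 2 / 4)) := by
    intro x
    have := diff_sq_le (A := A) (x := x) hA
    rw [show x ^ 2 / 4 - A ^ 2 / 4 = x ^ 2 / 4 + (-(A ^ 2) / 4) by ring,
      Real.exp_add, hexpA] at this
    calc d x ^ 2 ≤ x ^ 2 * (Real.exp (x ^ 2 / 4) * h) := this
      _ = h * (x ^ 2 * Real.exp (x ^ 2 / 4)) := by ring
  have int_d2 : Integrable (fun x => d x ^ 2) γ := by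
    refine integrable_sq.mono ((hdcont.pow 2).aestronglyMeasurable) (ae_of_all _ fun x => ?_)
    have h1 : d x ^ 2 ≤ x ^ 2 := by
      have := clamp_sq_le (A := A) (x := x) hA
      simp only [hd, hc]
      rcases le_total x (-A) with hx | hx
      · rw [min_eq_right (hx.trans (by linarith)), max_eq_left hx]; nlinarith
      rcases le_total A x with h2 | h2
      · rw [min_eq_left h2, max_eq_right (by linarith)]; nlinarith
      · rw [min_eq_right h2, max_eq_right hx]; simp; positivity
    simpa [abs_of_nonneg (sq_nonneg (d x)), abs_of_nonneg (sq_nonneg x)] using h1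
  set T := ∫ x, d x ^ 2 ∂γ with hT
  have hT0 : 0 ≤ T := integral_nonneg fun x => sq_nonneg _
  have hTM : T ≤ h * M := by
    calc T ≤ ∫ x, h * (x ^ 2 * Real.exp (x ^ 2 / 4)) ∂γ :=
        integral_mono int_d2 (integrable_aux.const_mul h) hdbound
      _ = h * M := by rw [integral_const_mul]
  -- product bound
  set G : ℝ × ℝ → ℝ := fun p => 2 * h ^ 2 * (p.1 ^ 2 * d p.2 ^ 2 + d p.1 ^ 2 * p.2 ^ 2) with hG
  have intG : Integrable G (γ.prod γ) := by
    refine (Integrable.add ?_ ?_).const_mul _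
    · exact integrable_sq.mul_prod int_d2
    · exact int_d2.mul_prod integrable_sq
  have hpoint : ∀ p : ℝ × ℝ,
      (h * (c p.1 * c p.2) - h * (p.1 * p.2)) ^ 2 ≤ G p := by
    intro p
    have e1 : c p.1 ^ 2 ≤ p.1 ^ 2 := clamp_sq_le hA
    have e2 : (h * (c p.1 * c p.2) - h * (p.1 * p.2))
        = h * (c p.1 * (c p.2 - p.2) + p.2 * (c p.1 - p.1)) := by ring
    have e3 : (c p.2 - p.2) ^ 2 = d p.2 ^ 2 := by simp only [hd]; ring
    have e4 : (c p.1 - p.1) ^ 2 = d p.1 ^ 2 := by simp only [hd]; ring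
    rw [e2, hG]
    have key : (c p.1 * (c p.2 - p.2) + p.2 * (c p.1 - p.1)) ^ 2
        ≤ 2 * (p.1 ^ 2 * d p.2 ^ 2 + d p.1 ^ 2 * p.2 ^ 2) := by
      nlinarith [sq_nonneg (c p.1 * (c p.2 - p.2) - p.2 * (c p.1 - p.1)),
        sq_nonneg (c p.2 - p.2), mul_le_mul_of_nonneg_right e1 (sq_nonneg (c p.2 - p.2))]
    calc (h * (c p.1 * (c p.2 - p.2) + p.2 * (c p.1 - p.1))) ^ 2
        = h ^ 2 * (c p.1 * (c p.2 - p.2) + p.2 * (c p.1 - p.1)) ^ 2 := by ring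
      _ ≤ h ^ 2 * (2 * (p.1 ^ 2 * d p.2 ^ 2 + d p.1 ^ 2 * p.2 ^ 2)) := by
          exact mul_le_mul_of_nonneg_left key (by positivity)
      _ = 2 * h ^ 2 * (p.1 ^ 2 * d p.2 ^ 2 + d p.1 ^ 2 * p.2 ^ 2) := by ring
  have step1 : (∫ p : ℝ × ℝ, (h * (c p.1 * c p.2) - h * (p.1 * p.2)) ^ 2 ∂(γ.prod γ))
      ≤ ∫ p, G p ∂(γ.prod γ) := by
    refine integral_mono_of_nonneg (ae_of_all _ fun p => sq_nonneg _) intG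
      (ae_of_all _ hpoint)
  have step2 : (∫ p, G p ∂(γ.prod γ)) = 2 * h ^ 2 * (S * T + T * S) := by
    rw [hG]
    rw [integral_const_mul]
    congr 1
    rw [integral_add (integrable_sq.mul_prod int_d2) (int_d2.mul_prod integrable_sq),
      integral_prod_mul (f := fun x : ℝ => x ^ 2) (g := fun y : ℝ => d y ^ 2),
      integral_prod_mul (f := fun x : ℝ => d x ^ 2) (g := fun y : ℝ => y ^ 2)]
  have final : 2 * h ^ 2 * (S * T + T * S) ≤ 4 * (S + 1) * (M + 1) * h ^ 3 := by
    have : S * T ≤ S * (h * M) := mul_le_mul_of_nonneg_left hTM hS0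
    nlinarith [mul_le_mul_of_nonneg_left hTM hS0, sq_nonneg h, mul_nonneg hS0 hM0,
      mul_nonneg (mul_nonneg h0.le h0.le) h0.le]
  calc (∫ p : ℝ × ℝ, (h * (c p.1 * c p.2) - h * (p.1 * p.2)) ^ 2 ∂(γ.prod γ))
      ≤ 2 * h ^ 2 * (S * T + T * S) := step1.trans (le_of_eq step2)
    _ ≤ 4 * (S + 1) * (M + 1) * h ^ 3 := final
end
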